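/- arXiv:2102.03498 — 3 statements merged into one kernel-verified Lean document; each statement's English description precedes it below -/
import Mathlib

section
/- Let λ > 1, γ ≥ 0 and θ > 3 + γ. There exists a constant c0 > 0 (depending only on λ, γ, θ) such that for every sequence u = (u_j)_{j≥1} of nonnegative reals with ∑_{j≥1} λ_j^{2γ+θ} u_j³ < ∞, one has ‖u‖_{γ+1} < ∞ and both ∑_{j≥1} λ_j^{2γ+θ} u_j³ ≥ c0 ‖u‖_{γ+1}³ and ∑_{j≥1} λ_j^{2γ+θ+1} u_j³ ≥ c0 ‖u‖_{γ+1}³ (the latter sum being possibly infinite). -/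
open Real MeasureTheory Set
open scoped ENNReal

noncomputable section

/-- Square of the `H^s` norm as an extended nonnegative real: `∑_{j≥1} λ^{2sj} u_j²`. -/
def esum (lam s : ℝ) (u : ℕ → ℝ) : ℝ≥0∞ :=
  ∑' j : ℕ, ENNReal.ofReal (lam ^ (2 * s * ((j : ℝ) + 1)) * (u (j + 1)) ^ 2)

/-- Square of the `H^s` norm, real-valued: `∑_{j≥1} λ^{2sj} u_j²`. -/
def dsum (lam s : ℝ) (u : ℕ → ℝ) : ℝ :=
  ∑' j : ℕ, lam ^ (2 * s * ((j : ℝ) + 1)) * (u (j + 1)) ^ 2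

/-- The `H^s` norm `‖u‖_s = (∑_{j≥1} λ^{2sj} u_j²)^{1/2}`. -/
def dnorm (lam s : ℝ) (u : ℕ → ℝ) : ℝ := Real.sqrt (dsum lam s u)

/-- Flux-type sum `∑_{j≥1} λ^{sj} u_j² v_{j+1}` as an extended nonnegative real. -/
def eflux (lam s : ℝ) (u v : ℕ → ℝ → ℝ) (τ : ℝ) : ℝ≥0∞ :=
  ∑' j : ℕ, ENNReal.ofReal (lam ^ (s * ((j : ℝ) + 1)) * ((u (j + 1) τ) ^ 2 * v (j + 2) τ))

/-- The dyadic (Hall) MHD system: `(a, b)` is a solution on `[0,∞)` with (one-sided)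
derivatives `a'`, `b'`; each `a_j, b_j` is `C¹` on `[0,∞)`, `a_0 ≡ 0 ≡ b_0`,
the ODEs hold for `j ≥ 1`, `t ≥ 0`, and `(a_j(t))_{j≥1}, (b_j(t))_{j≥1} ∈ ℓ²`. -/
structure IsDyadicSol (lam θ ν μ di : ℝ) (a b a' b' : ℕ → ℝ → ℝ) : Prop where
  a_zero : ∀ t : ℝ, a 0 t = 0
  b_zero : ∀ t : ℝ, b 0 t = 0
  a_deriv : ∀ j : ℕ, ∀ t ∈ Ici (0:ℝ), HasDerivWithinAt (a j) (a' j t) (Ici 0) t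
  b_deriv : ∀ j : ℕ, ∀ t ∈ Ici (0:ℝ), HasDerivWithinAt (b j) (b' j t) (Ici 0) t
  a_deriv_cont : ∀ j : ℕ, ContinuousOn (a' j) (Ici 0)
  b_deriv_cont : ∀ j : ℕ, ContinuousOn (b' j) (Ici 0)
  eq_a : ∀ j : ℕ, 1 ≤ j → ∀ t ∈ Ici (0:ℝ),
    a' j t + ν * lam ^ (2 * (j : ℝ)) * a j t =
      -(lam ^ (θ * (j : ℝ)) * a j t * a (j + 1) t
          - lam ^ (θ * ((j : ℝ) - 1)) * (a (j - 1) t) ^ 2)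
        - (lam ^ (θ * (j : ℝ)) * b j t * b (j + 1) t
          - lam ^ (θ * ((j : ℝ) - 1)) * (b (j - 1) t) ^ 2)
  eq_b : ∀ j : ℕ, 1 ≤ j → ∀ t ∈ Ici (0:ℝ),
    b' j t + μ * lam ^ (2 * (j : ℝ)) * b j t =
      lam ^ (θ * (j : ℝ)) * a j t * b (j + 1) t
        - lam ^ (θ * (j : ℝ)) * b j t * a (j + 1) t
        - di * (lam ^ ((θ + 1) * (j : ℝ)) * b j t * b (j + 1) t
          - lam ^ ((θ + 1) * ((j : ℝ) - 1)) * (b (j - 1) t) ^ 2)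
  ell2_a : ∀ t ∈ Ici (0:ℝ), Summable (fun j : ℕ => (a (j + 1) t) ^ 2)
  ell2_b : ∀ t ∈ Ici (0:ℝ), Summable (fun j : ℕ => (b (j + 1) t) ^ 2)

/-- The rescaled dyadic (Hall) MHD system with wavenumbers `Λ_j = Λ^j` and
dissipation exponent `α`. -/
structure IsRescaledSol (Lam α ν μ di : ℝ) (a b a' b' : ℕ → ℝ → ℝ) : Prop where
  a_zero : ∀ t : ℝ, a 0 t = 0
  b_zero : ∀ t : ℝ, b 0 t = 0
  a_deriv : ∀ j : ℕ, ∀ t ∈ Ici (0:ℝ), HasDerivWithinAt (a j) (a' j t) (Ici 0) t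
  b_deriv : ∀ j : ℕ, ∀ t ∈ Ici (0:ℝ), HasDerivWithinAt (b j) (b' j t) (Ici 0) t
  a_deriv_cont : ∀ j : ℕ, ContinuousOn (a' j) (Ici 0)
  b_deriv_cont : ∀ j : ℕ, ContinuousOn (b' j) (Ici 0)
  eq_a : ∀ j : ℕ, 1 ≤ j → ∀ t ∈ Ici (0:ℝ),
    a' j t + ν * Lam ^ (2 * α * (j : ℝ)) * a j t =
      -(Lam ^ (j : ℝ) * a j t * a (j + 1) t) + Lam ^ ((j : ℝ) - 1) * (a (j - 1) t) ^ 2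
        - Lam ^ (j : ℝ) * b j t * b (j + 1) t + Lam ^ ((j : ℝ) - 1) * (b (j - 1) t) ^ 2
  eq_b : ∀ j : ℕ, 1 ≤ j → ∀ t ∈ Ici (0:ℝ),
    b' j t + μ * Lam ^ (2 * α * (j : ℝ)) * b j t =
      Lam ^ (j : ℝ) * a j t * b (j + 1) t - Lam ^ (j : ℝ) * b j t * a (j + 1) t
        - di * (Lam ^ ((α + 1) * (j : ℝ)) * b j t * b (j + 1) t
          - Lam ^ ((α + 1) * ((j : ℝ) - 1)) * (b (j - 1) t) ^ 2)
  ell2_a : ∀ t ∈ Ici (0:ℝ), Summable (fun j : ℕ => (a (j + 1) t) ^ 2)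
  ell2_b : ∀ t ∈ Ici (0:ℝ), Summable (fun j : ℕ => (b (j + 1) t) ^ 2)

/-- A solution is positive when all components `a_j(t), b_j(t)` (for `j ≥ 1`,
`t ≥ 0`) are positive. -/
def PositiveSol (a b : ℕ → ℝ → ℝ) : Prop :=
  ∀ j : ℕ, 1 ≤ j → ∀ t ∈ Ici (0:ℝ), 0 < a j t ∧ 0 < b j t

/-!
Each weighted cube `λ_j^{2γ+θ} u_j³` is at most the total `S = T³`, so `λ_j^{(2γ+θ)/3} u_j ≤ T`.
Hence `λ_j^{2γ+2} u_j² ≤ T² λ_j^{2γ+2-2(2γ+θ)/3}`, and this exponent is negative exactly when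
`θ > 3 + γ`. The squares are thus dominated by a geometric series of ratio
`r = λ^{2γ+2-2(2γ+θ)/3} < 1`, so `‖u‖²_{γ+1} ≤ T² / (1 - r)`, i.e. `‖u‖³_{γ+1} ≤ (1 - r)^{-3/2} S`.
-/

theorem summable_and_tsum_le_of_le_geometric {f : ℕ → ℝ} {M r : ℝ} (hf : ∀ j, 0 ≤ f j)
    (hr₀ : 0 ≤ r) (hr₁ : r < 1) (h : ∀ j, f j ≤ M * r ^ j) :
    Summable f ∧ ∑' j, f j ≤ M * (1 - r)⁻¹ := by
  have hgeo : Summable fun j : ℕ => M * r ^ j :=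
    (summable_geometric_of_lt_one hr₀ hr₁).mul_left M
  have hsum : Summable f := .of_nonneg_of_le hf h hgeo
  refine ⟨hsum, ?_⟩
  calc ∑' j, f j ≤ ∑' j, M * r ^ j := hsum.tsum_le_tsum h hgeo
    _ = M * (1 - r)⁻¹ := by rw [tsum_mul_left, tsum_geometric_of_lt_one hr₀ hr₁]

theorem rpow_mul_sq_le_of_rpow_mul_cube_le {lam a b k x T : ℝ} (hlam : 0 < lam) (hx : 0 ≤ x)
    (hT : 0 ≤ T) (h : lam ^ (a * k) * x ^ 3 ≤ T ^ 3) :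
    lam ^ (b * k) * x ^ 2 ≤ T ^ 2 * lam ^ ((b - 2 * a / 3) * k) := by
  set v := lam ^ (a * k / 3) * x
  have hv : v ≤ T := by
    refine le_of_pow_le_pow_left₀ three_ne_zero hT ?_
    rwa [mul_pow, ← rpow_mul_natCast hlam.le, Nat.cast_ofNat, div_mul_cancel₀ _ three_ne_zero]
  have hsplit : lam ^ (b * k) * x ^ 2 = v ^ 2 * lam ^ ((b - 2 * a / 3) * k) := by
    rw [mul_pow, ← rpow_mul_natCast hlam.le, mul_right_comm, ← rpow_add hlam]
    ring_nf
  rw [hsplit]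
  gcongr

theorem summable_and_tsum_le_of_rpow_mul_cube_le {lam a b T : ℝ} {u : ℕ → ℝ} (hlam : 1 < lam)
    (hab : 3 * b < 2 * a) (hu : ∀ j, 0 ≤ u j) (hT : 0 ≤ T)
    (h : ∀ j : ℕ, lam ^ (a * ((j : ℝ) + 1)) * u j ^ 3 ≤ T ^ 3) :
    Summable (fun j : ℕ => lam ^ (b * ((j : ℝ) + 1)) * u j ^ 2) ∧
      ∑' j : ℕ, lam ^ (b * ((j : ℝ) + 1)) * u j ^ 2 ≤ T ^ 2 * (1 - lam ^ (b - 2 * a / 3))⁻¹ := by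
  have hlam₀ : 0 < lam := one_pos.trans hlam
  set r := lam ^ (b - 2 * a / 3)
  have hr₀ : 0 ≤ r := rpow_nonneg hlam₀.le _
  have hr₁ : r < 1 := rpow_lt_one_of_one_lt_of_neg hlam (by linarith)
  refine summable_and_tsum_le_of_le_geometric (fun j => by positivity) hr₀ hr₁ fun j => ?_
  calc lam ^ (b * ((j : ℝ) + 1)) * u j ^ 2
      ≤ T ^ 2 * lam ^ ((b - 2 * a / 3) * ((j : ℝ) + 1)) :=
        rpow_mul_sq_le_of_rpow_mul_cube_le hlam₀ (hu j) hT (h j)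
    _ = T ^ 2 * r ^ (j + 1) := by
        rw [rpow_mul hlam₀.le, ← Nat.cast_add_one, rpow_natCast]
    _ ≤ T ^ 2 * r ^ j := by
        have := pow_le_pow_of_le_one hr₀ hr₁.le j.le_succ
        gcongr

theorem sqrt_pow_three_le_of_le_sq_mul {D C T : ℝ} (hT : 0 ≤ T) (h : D ≤ T ^ 2 * C) :
    √D ^ 3 ≤ √C ^ 3 * T ^ 3 := by
  have hsqrt : √D ≤ T * √C := by
    rw [← sqrt_sq hT, ← sqrt_mul (sq_nonneg T)]
    exact sqrt_le_sqrt h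
  calc √D ^ 3 ≤ (T * √C) ^ 3 := by gcongr
    _ = √C ^ 3 * T ^ 3 := by ring

theorem ofReal_tsum_le_tsum_ofReal {f g : ℕ → ℝ} (hf : ∀ j, 0 ≤ f j) (hsum : Summable f)
    (hfg : ∀ j, f j ≤ g j) :
    ENNReal.ofReal (∑' j, f j) ≤ ∑' j, ENNReal.ofReal (g j) := by
  rw [ENNReal.ofReal_tsum_of_nonneg hf hsum]
  exact ENNReal.tsum_le_tsum fun j => ENNReal.ofReal_le_ofReal (hfg j)

theorem cube_sum_lower_bound_general
    (lam γ θ : ℝ) (hlam : 1 < lam) (hθ : 3 + γ < θ) :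
    ∃ c0 : ℝ, 0 < c0 ∧
      ∀ u : ℕ → ℝ, (∀ j : ℕ, 1 ≤ j → 0 ≤ u j) →
        Summable (fun j : ℕ => lam ^ ((2 * γ + θ) * ((j : ℝ) + 1)) * (u (j + 1)) ^ 3) →
        Summable (fun j : ℕ => lam ^ (2 * (γ + 1) * ((j : ℝ) + 1)) * (u (j + 1)) ^ 2) ∧
        c0 * dnorm lam (γ + 1) u ^ 3
          ≤ ∑' j : ℕ, lam ^ ((2 * γ + θ) * ((j : ℝ) + 1)) * (u (j + 1)) ^ 3 ∧
        ENNReal.ofReal (c0 * dnorm lam (γ + 1) u ^ 3)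
          ≤ ∑' j : ℕ,
              ENNReal.ofReal (lam ^ ((2 * γ + θ + 1) * ((j : ℝ) + 1)) * (u (j + 1)) ^ 3) := by
  have hlam₀ : 0 < lam := one_pos.trans hlam
  set C := (1 - lam ^ (2 * (γ + 1) - 2 * (2 * γ + θ) / 3))⁻¹
  have hC : 0 < C := inv_pos.2 (sub_pos.2 (rpow_lt_one_of_one_lt_of_neg hlam (by linarith)))
  refine ⟨(√C ^ 3)⁻¹, by positivity, fun u hu hS => ?_⟩
  have hu' (j : ℕ) : 0 ≤ u (j + 1) := hu (j + 1) j.succ_pos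
  have hcube (j : ℕ) : 0 ≤ lam ^ ((2 * γ + θ) * ((j : ℝ) + 1)) * u (j + 1) ^ 3 := by
    have := hu' j; positivity
  set S := ∑' j : ℕ, lam ^ ((2 * γ + θ) * ((j : ℝ) + 1)) * u (j + 1) ^ 3
  set T := S ^ ((3 : ℕ)⁻¹ : ℝ)
  have hS₀ : 0 ≤ S := tsum_nonneg hcube
  have hT : 0 ≤ T := by positivity
  have hT3 : T ^ 3 = S := rpow_inv_natCast_pow hS₀ three_ne_zero
  obtain ⟨hsq, hsq_le⟩ := summable_and_tsum_le_of_rpow_mul_cube_le (a := 2 * γ + θ)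
    (b := 2 * (γ + 1)) (u := fun j => u (j + 1)) hlam (by linarith) hu' hT
    fun j => hT3 ▸ hS.le_tsum j fun i _ => hcube i
  have hnorm : (√C ^ 3)⁻¹ * dnorm lam (γ + 1) u ^ 3 ≤ S := by
    rw [inv_mul_le_iff₀ (by positivity), ← hT3]
    exact sqrt_pow_three_le_of_le_sq_mul hT hsq_le
  refine ⟨hsq, hnorm, (ENNReal.ofReal_le_ofReal hnorm).trans ?_⟩
  refine ofReal_tsum_le_tsum_ofReal hcube hS fun j => ?_
  have hweight : lam ^ ((2 * γ + θ) * ((j : ℝ) + 1)) ≤ lam ^ ((2 * γ + θ + 1) * ((j : ℝ) + 1)) :=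
    rpow_le_rpow_of_exponent_le hlam.le (by linarith [(j.cast_nonneg : (0 : ℝ) ≤ j)])
  exact mul_le_mul_of_nonneg_right hweight (pow_nonneg (hu' j) 3)

theorem cube_sum_lower_bound
    (lam γ θ : ℝ) (hlam : 1 < lam) (hγ : 0 ≤ γ) (hθ : 3 + γ < θ) :
    ∃ c0 : ℝ, 0 < c0 ∧
      ∀ u : ℕ → ℝ, (∀ j : ℕ, 1 ≤ j → 0 ≤ u j) →
        Summable (fun j : ℕ => lam ^ ((2 * γ + θ) * ((j : ℝ) + 1)) * (u (j + 1)) ^ 3) →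
        Summable (fun j : ℕ => lam ^ (2 * (γ + 1) * ((j : ℝ) + 1)) * (u (j + 1)) ^ 2) ∧
        c0 * dnorm lam (γ + 1) u ^ 3
          ≤ ∑' j : ℕ, lam ^ ((2 * γ + θ) * ((j : ℝ) + 1)) * (u (j + 1)) ^ 3 ∧
        ENNReal.ofReal (c0 * dnorm lam (γ + 1) u ^ 3)
          ≤ ∑' j : ℕ,
              ENNReal.ofReal (lam ^ ((2 * γ + θ + 1) * ((j : ℝ) + 1)) * (u (j + 1)) ^ 3) :=
  cube_sum_lower_bound_general lam γ θ hlam hθ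
end
end

section
/- Let λ ≥ 2, γ > 0, θ > 3 + γ, ν ≥ 0, μ ≥ 0, d_i = 0, and let c1, c2, c3 > 0. Let (a,b) be a positive solution of the dyadic MHD system on [0,∞) with ‖a(0)‖_γ² + ‖b(0)‖_γ² < ∞, and assume that t ↦ ‖a(t)‖_{θ/3+2γ/3}³ + ‖b(t)‖_{θ/3+2γ/3}³ is locally integrable on [0,∞). Then for every t ≥ 0 the quantity L(t) := ‖a(t)‖_γ² + ‖b(t)‖_γ² + c1 ∑_{j≥1} λ_j^{2γ} a_j(t) a_{j+1}(t) + c2 ∑_{j≥1} λ_j^{2γ} b_j(t) a_{j+1}(t) + c3 ∑_{j≥1} λ_j^{2γ} a_j(t) b_j(t) is finite, and the function t ↦ L(t) is continuous on [0,∞). -/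
open Real MeasureTheory Set
open scoped ENNReal

noncomputable section

/-!
Split the solution into shells with weighted energies `λ^{2γj} (a_j² + b_j²)`. Without Hall term
the nonlinearity only moves energy from each shell to the next one, so for a positive solution the
energy of a shell grows at most by the flux it receives from the shell below: the outgoing flux and
the dissipation have a sign. Summed over shells, the incoming fluxes are dominated pointwise in time
by `λ^{2γ} (‖a‖_s³ + ‖b‖_s³)` with `s = θ/3 + 2γ/3`, which is locally integrable by assumption.
On `[0, T]` each shell energy is therefore bounded by its initial value plus its time-integrated
incoming flux, a bound that is summable over shells. It controls the five series of the Lyapunov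
function term by term, and the Weierstrass M-test gives their continuity.
-/

def shellWeight (lam γ : ℝ) (k : ℕ) : ℝ := lam ^ (2 * γ * ((k : ℝ) + 1))

-- Shell `k` carries the modes `a_{k+1}, b_{k+1}`; `shellFlux k` is the weighted rate at which it
-- receives energy from the modes `a_k, b_k`.
def shellEnergy (lam γ : ℝ) (a b : ℕ → ℝ → ℝ) (k : ℕ) (t : ℝ) : ℝ :=
  shellWeight lam γ k * (a (k + 1) t ^ 2 + b (k + 1) t ^ 2)

def shellFlux (lam θ γ : ℝ) (a b : ℕ → ℝ → ℝ) (k : ℕ) (t : ℝ) : ℝ :=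
  2 * shellWeight lam γ k * lam ^ (θ * k) * (a k t ^ 2 + b k t ^ 2) * a (k + 1) t

def lyapunov (lam γ c1 c2 c3 : ℝ) (a b : ℕ → ℝ → ℝ) (t : ℝ) : ℝ :=
  dsum lam γ (fun j => a j t) + dsum lam γ (fun j => b j t)
    + c1 * ∑' k, shellWeight lam γ k * (a (k + 1) t * a (k + 2) t)
    + c2 * ∑' k, shellWeight lam γ k * (b (k + 1) t * a (k + 2) t)
    + c3 * ∑' k, shellWeight lam γ k * (a (k + 1) t * b (k + 1) t)

section ShellWeight

variable {lam γ : ℝ}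

lemma shellWeight_nonneg (hlam : 0 ≤ lam) (k : ℕ) : 0 ≤ shellWeight lam γ k :=
  rpow_nonneg hlam _

lemma shellWeight_mono (hlam : 1 ≤ lam) (hγ : 0 ≤ γ) : Monotone (shellWeight lam γ) :=
  fun k l hkl => rpow_le_rpow_of_exponent_le hlam (by gcongr)

lemma abs_mul_le_sq_add_sq (x y : ℝ) : |x * y| ≤ x ^ 2 + y ^ 2 := by
  rw [abs_mul, ← sq_abs x, ← sq_abs y]
  nlinarith [two_mul_le_add_sq |x| |y|, abs_nonneg x, abs_nonneg y]

variable {s : Set ℝ} {x y : ℕ → ℝ → ℝ} {u : ℕ → ℝ}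

lemma norm_shellWeight_mul_le (hlam : 1 ≤ lam) (hγ : 0 ≤ γ) {t : ℝ}
    (hx : ∀ k, shellWeight lam γ k * x (k + 1) t ^ 2 ≤ u k)
    (hy : ∀ k, shellWeight lam γ k * y (k + 1) t ^ 2 ≤ u k) (m k : ℕ) :
    ‖shellWeight lam γ k * (x (k + 1) t * y (k + m + 1) t)‖ ≤ u k + u (k + m) := by
  have hW := shellWeight_nonneg (γ := γ) (zero_le_one.trans hlam) k
  have hWm : shellWeight lam γ k ≤ shellWeight lam γ (k + m) :=
    shellWeight_mono hlam hγ (Nat.le_add_right k m)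
  calc ‖shellWeight lam γ k * (x (k + 1) t * y (k + m + 1) t)‖
      ≤ shellWeight lam γ k * (x (k + 1) t ^ 2 + y (k + m + 1) t ^ 2) := by
        rw [norm_mul, Real.norm_of_nonneg hW, Real.norm_eq_abs]
        exact mul_le_mul_of_nonneg_left (abs_mul_le_sq_add_sq _ _) hW
    _ ≤ shellWeight lam γ k * x (k + 1) t ^ 2
        + shellWeight lam γ (k + m) * y (k + m + 1) t ^ 2 := by
        rw [mul_add]
        gcongr
    _ ≤ u k + u (k + m) := add_le_add (hx k) (hy (k + m))

lemma summable_shellWeight_mul (hlam : 1 ≤ lam) (hγ : 0 ≤ γ) (hu : Summable u) {t : ℝ}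
    (hx : ∀ k, shellWeight lam γ k * x (k + 1) t ^ 2 ≤ u k)
    (hy : ∀ k, shellWeight lam γ k * y (k + 1) t ^ 2 ≤ u k) (m : ℕ) :
    Summable fun k => shellWeight lam γ k * (x (k + 1) t * y (k + m + 1) t) :=
  .of_norm_bounded (hu.add ((summable_nat_add_iff m).2 hu))
    (norm_shellWeight_mul_le hlam hγ hx hy m)

lemma continuousOn_tsum_shellWeight_mul (hlam : 1 ≤ lam) (hγ : 0 ≤ γ) (hu : Summable u)
    (hx : ∀ t ∈ s, ∀ k, shellWeight lam γ k * x (k + 1) t ^ 2 ≤ u k)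
    (hy : ∀ t ∈ s, ∀ k, shellWeight lam γ k * y (k + 1) t ^ 2 ≤ u k)
    (hxc : ∀ j, ContinuousOn (x j) s) (hyc : ∀ j, ContinuousOn (y j) s) (m : ℕ) :
    ContinuousOn (fun t => ∑' k, shellWeight lam γ k * (x (k + 1) t * y (k + m + 1) t)) s :=
  continuousOn_tsum (fun _ => continuousOn_const.mul ((hxc _).mul (hyc _)))
    (hu.add ((summable_nat_add_iff m).2 hu))
    (fun k t ht => norm_shellWeight_mul_le hlam hγ (hx t ht) (hy t ht) m k)

lemma summable_shellWeight_sq (hlam : 0 ≤ lam) (hu : Summable u) {t : ℝ}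
    (hx : ∀ k, shellWeight lam γ k * x (k + 1) t ^ 2 ≤ u k) :
    Summable fun k => shellWeight lam γ k * x (k + 1) t ^ 2 :=
  .of_nonneg_of_le (fun k => mul_nonneg (shellWeight_nonneg hlam k) (sq_nonneg _)) hx hu

lemma continuousOn_tsum_shellWeight_sq (hlam : 0 ≤ lam) (hu : Summable u)
    (hx : ∀ t ∈ s, ∀ k, shellWeight lam γ k * x (k + 1) t ^ 2 ≤ u k)
    (hxc : ∀ j, ContinuousOn (x j) s) :
    ContinuousOn (fun t => ∑' k, shellWeight lam γ k * x (k + 1) t ^ 2) s :=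
  continuousOn_tsum (fun _ => continuousOn_const.mul ((hxc _).pow 2)) hu fun k t ht => by
    rw [Real.norm_of_nonneg (mul_nonneg (shellWeight_nonneg hlam k) (sq_nonneg _))]
    exact hx t ht k

end ShellWeight

section Lyapunov

variable {lam γ : ℝ} {s : Set ℝ} {a b : ℕ → ℝ → ℝ} {u : ℕ → ℝ}

lemma shellWeight_mul_sq_le_shellEnergy_left (hlam : 0 ≤ lam) (k : ℕ) (t : ℝ) :
    shellWeight lam γ k * a (k + 1) t ^ 2 ≤ shellEnergy lam γ a b k t := by
  rw [shellEnergy, mul_add]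
  exact le_add_of_nonneg_right (mul_nonneg (shellWeight_nonneg hlam k) (sq_nonneg _))

lemma shellWeight_mul_sq_le_shellEnergy_right (hlam : 0 ≤ lam) (k : ℕ) (t : ℝ) :
    shellWeight lam γ k * b (k + 1) t ^ 2 ≤ shellEnergy lam γ a b k t := by
  rw [shellEnergy, mul_add]
  exact le_add_of_nonneg_left (mul_nonneg (shellWeight_nonneg hlam k) (sq_nonneg _))

lemma summable_lyapunov_series_of_shellEnergy_le (hlam : 1 ≤ lam) (hγ : 0 ≤ γ)
    (hu : Summable u) (hE : ∀ t ∈ s, ∀ k, shellEnergy lam γ a b k t ≤ u k) {t : ℝ} (ht : t ∈ s) :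
    Summable (fun k => shellWeight lam γ k * a (k + 1) t ^ 2) ∧
    Summable (fun k => shellWeight lam γ k * b (k + 1) t ^ 2) ∧
    Summable (fun k => shellWeight lam γ k * (a (k + 1) t * a (k + 2) t)) ∧
    Summable (fun k => shellWeight lam γ k * (b (k + 1) t * a (k + 2) t)) ∧
    Summable (fun k => shellWeight lam γ k * (a (k + 1) t * b (k + 1) t)) := by
  have hlam0 : 0 ≤ lam := zero_le_one.trans hlam
  have ha k := (shellWeight_mul_sq_le_shellEnergy_left hlam0 k t).trans (hE t ht k)
  have hb k := (shellWeight_mul_sq_le_shellEnergy_right hlam0 k t).trans (hE t ht k)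
  exact ⟨summable_shellWeight_sq hlam0 hu ha, summable_shellWeight_sq hlam0 hu hb,
    summable_shellWeight_mul hlam hγ hu ha ha 1, summable_shellWeight_mul hlam hγ hu hb ha 1,
    summable_shellWeight_mul hlam hγ hu ha hb 0⟩

lemma continuousOn_lyapunov_of_shellEnergy_le (hlam : 1 ≤ lam) (hγ : 0 ≤ γ)
    (hu : Summable u) (hE : ∀ t ∈ s, ∀ k, shellEnergy lam γ a b k t ≤ u k) (c1 c2 c3 : ℝ)
    (hac : ∀ j, ContinuousOn (a j) s) (hbc : ∀ j, ContinuousOn (b j) s) :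
    ContinuousOn (lyapunov lam γ c1 c2 c3 a b) s := by
  have hlam0 : 0 ≤ lam := zero_le_one.trans hlam
  have ha t ht k := (shellWeight_mul_sq_le_shellEnergy_left hlam0 k t).trans (hE t ht k)
  have hb t ht k := (shellWeight_mul_sq_le_shellEnergy_right hlam0 k t).trans (hE t ht k)
  exact ((((continuousOn_tsum_shellWeight_sq hlam0 hu ha hac).add
    (continuousOn_tsum_shellWeight_sq hlam0 hu hb hbc)).add
    (continuousOn_const.mul (continuousOn_tsum_shellWeight_mul hlam hγ hu ha ha hac hac 1))).add
    (continuousOn_const.mul (continuousOn_tsum_shellWeight_mul hlam hγ hu hb ha hbc hac 1))).add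
    (continuousOn_const.mul (continuousOn_tsum_shellWeight_mul hlam hγ hu ha hb hac hbc 0))

end Lyapunov

lemma ENNReal.mul_rpow_half (x : ℝ≥0∞) : x * x ^ (1 / 2 : ℝ) = x ^ (3 / 2 : ℝ) := by
  rw [show (3 / 2 : ℝ) = 1 + 1 / 2 by norm_num,
    ENNReal.rpow_add_of_nonneg _ _ zero_le_one (by norm_num), ENNReal.rpow_one]

lemma ENNReal.add_mul_rpow_half_le (A B : ℝ≥0∞) :
    (A + B) * A ^ (1 / 2 : ℝ) ≤ 2 * (A ^ (3 / 2 : ℝ) + B ^ (3 / 2 : ℝ)) := by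
  have hB : B * A ^ (1 / 2 : ℝ) ≤ A ^ (3 / 2 : ℝ) + B ^ (3 / 2 : ℝ) := by
    rcases le_total A B with h | h
    · calc B * A ^ (1 / 2 : ℝ) ≤ B * B ^ (1 / 2 : ℝ) := by gcongr
        _ ≤ _ := B.mul_rpow_half.trans_le le_add_self
    · calc B * A ^ (1 / 2 : ℝ) ≤ A * A ^ (1 / 2 : ℝ) := by gcongr
        _ ≤ _ := A.mul_rpow_half.trans_le le_self_add
  calc (A + B) * A ^ (1 / 2 : ℝ) = A ^ (3 / 2 : ℝ) + B * A ^ (1 / 2 : ℝ) := by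
        rw [add_mul, A.mul_rpow_half]
    _ ≤ (A ^ (3 / 2 : ℝ) + B ^ (3 / 2 : ℝ)) + (A ^ (3 / 2 : ℝ) + B ^ (3 / 2 : ℝ)) :=
        add_le_add le_self_add hB
    _ = _ := (two_mul _).symm

section Esum

variable {lam s : ℝ} {u : ℕ → ℝ}

lemma summable_of_esum_ne_top (hlam : 0 ≤ lam) (h : esum lam s u ≠ ⊤) :
    Summable fun j : ℕ => lam ^ (2 * s * ((j : ℝ) + 1)) * u (j + 1) ^ 2 :=
  (ENNReal.summable_toReal h).congr fun _ =>
    ENNReal.toReal_ofReal (mul_nonneg (rpow_nonneg hlam _) (sq_nonneg _))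

lemma ofReal_le_esum_rpow_half (hlam : 0 ≤ lam) (j : ℕ) (hu : 0 ≤ u (j + 1)) :
    ENNReal.ofReal (lam ^ (s * ((j : ℝ) + 1)) * u (j + 1)) ≤ esum lam s u ^ (1 / 2 : ℝ) := by
  have hy : 0 ≤ lam ^ (s * ((j : ℝ) + 1)) * u (j + 1) := mul_nonneg (rpow_nonneg hlam _) hu
  have hsq : (lam ^ (s * ((j : ℝ) + 1)) * u (j + 1)) ^ 2
      = lam ^ (2 * s * ((j : ℝ) + 1)) * u (j + 1) ^ 2 := by
    rw [mul_pow, ← rpow_natCast, ← rpow_mul hlam]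
    ring_nf
  calc ENNReal.ofReal (lam ^ (s * ((j : ℝ) + 1)) * u (j + 1))
      = ENNReal.ofReal ((lam ^ (s * ((j : ℝ) + 1)) * u (j + 1)) ^ 2) ^ (1 / 2 : ℝ) := by
        rw [ENNReal.ofReal_rpow_of_nonneg (sq_nonneg _) (by norm_num), ← sqrt_eq_rpow,
          sqrt_sq hy]
    _ ≤ esum lam s u ^ (1 / 2 : ℝ) := by
        gcongr
        rw [hsq]
        exact ENNReal.le_tsum (f := fun j : ℕ =>
          ENNReal.ofReal (lam ^ (2 * s * ((j : ℝ) + 1)) * u (j + 1) ^ 2)) j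

end Esum

section Solution

variable {lam θ γ ν μ di : ℝ} {a b a' b' : ℕ → ℝ → ℝ}

lemma IsDyadicSol.continuousOn_a (hsol : IsDyadicSol lam θ ν μ di a b a' b') (j : ℕ) :
    ContinuousOn (a j) (Ici 0) :=
  fun t ht => (hsol.a_deriv j t ht).continuousWithinAt

lemma IsDyadicSol.continuousOn_b (hsol : IsDyadicSol lam θ ν μ di a b a' b') (j : ℕ) :
    ContinuousOn (b j) (Ici 0) :=
  fun t ht => (hsol.b_deriv j t ht).continuousWithinAt

lemma IsDyadicSol.continuousOn_shellFlux (hsol : IsDyadicSol lam θ ν μ di a b a' b') (k : ℕ) :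
    ContinuousOn (shellFlux lam θ γ a b k) (Ici 0) :=
  (continuousOn_const.mul (((hsol.continuousOn_a k).pow 2).add
    ((hsol.continuousOn_b k).pow 2))).mul (hsol.continuousOn_a (k + 1))

lemma IsDyadicSol.hasDerivWithinAt_shellEnergy (hsol : IsDyadicSol lam θ ν μ di a b a' b')
    (k : ℕ) {t : ℝ} (ht : t ∈ Ici (0 : ℝ)) :
    HasDerivWithinAt (shellEnergy lam γ a b k)
      (shellWeight lam γ k * (2 * a (k + 1) t * a' (k + 1) t + 2 * b (k + 1) t * b' (k + 1) t))
      (Ici 0) t :=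
  ((((hsol.a_deriv (k + 1) t ht).fun_pow 2).fun_add
    ((hsol.b_deriv (k + 1) t ht).fun_pow 2)).const_mul (shellWeight lam γ k)).congr_deriv
    (by norm_num)

lemma shellFlux_nonneg (hlam : 0 ≤ lam) (hpos : PositiveSol a b) (k : ℕ) {t : ℝ}
    (ht : t ∈ Ici (0 : ℝ)) : 0 ≤ shellFlux lam θ γ a b k t :=
  mul_nonneg (mul_nonneg (mul_nonneg (mul_nonneg zero_le_two (shellWeight_nonneg hlam k))
    (rpow_nonneg hlam _)) (by positivity)) (hpos (k + 1) (Nat.le_add_left 1 k) t ht).1.le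

lemma IsDyadicSol.shellEnergy_deriv_le (hsol : IsDyadicSol lam θ ν μ 0 a b a' b')
    (hlam : 0 ≤ lam) (hν : 0 ≤ ν) (hμ : 0 ≤ μ) (hpos : PositiveSol a b) (k : ℕ) {t : ℝ}
    (ht : t ∈ Ici (0 : ℝ)) :
    shellWeight lam γ k * (2 * a (k + 1) t * a' (k + 1) t + 2 * b (k + 1) t * b' (k + 1) t)
      ≤ shellFlux lam θ γ a b k t := by
  have ha := hsol.eq_a (k + 1) (Nat.le_add_left 1 k) t ht
  have hb := hsol.eq_b (k + 1) (Nat.le_add_left 1 k) t ht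
  simp only [Nat.add_sub_cancel, Nat.cast_add, Nat.cast_one, add_sub_cancel_right, zero_mul,
    sub_zero] at ha hb
  set W := shellWeight lam γ k
  have hW : 0 ≤ W := shellWeight_nonneg hlam k
  have hdiss : ∀ {κ : ℝ}, 0 ≤ κ → ∀ x : ℝ, 0 ≤ W * (κ * lam ^ (2 * ((k : ℝ) + 1)) * x ^ 2) :=
    fun hκ x => mul_nonneg hW (mul_nonneg (mul_nonneg hκ (rpow_nonneg hlam _)) (sq_nonneg x))
  have hout : 0 ≤ W * lam ^ (θ * ((k : ℝ) + 1)) * (a (k + 1) t ^ 2 + b (k + 1) t ^ 2)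
      * a (k + 1 + 1) t :=
    mul_nonneg (mul_nonneg (mul_nonneg hW (rpow_nonneg hlam _)) (by positivity))
      (hpos (k + 1 + 1) (Nat.le_add_left 1 _) t ht).1.le
  -- the magnetic stretching terms `±λ_j^θ a_j b_j b_{j+1}` cancel between the two equations
  have hbalance : W * (2 * a (k + 1) t * a' (k + 1) t + 2 * b (k + 1) t * b' (k + 1) t)
      = shellFlux lam θ γ a b k t
        - 2 * (W * lam ^ (θ * ((k : ℝ) + 1)) * (a (k + 1) t ^ 2 + b (k + 1) t ^ 2)
          * a (k + 1 + 1) t)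
        - 2 * (W * (ν * lam ^ (2 * ((k : ℝ) + 1)) * a (k + 1) t ^ 2))
        - 2 * (W * (μ * lam ^ (2 * ((k : ℝ) + 1)) * b (k + 1) t ^ 2)) := by
    rw [shellFlux]
    linear_combination (2 * W * a (k + 1) t) * ha + (2 * W * b (k + 1) t) * hb
  linarith [hdiss hν (a (k + 1) t), hdiss hμ (b (k + 1) t)]

lemma IsDyadicSol.shellEnergy_le (hsol : IsDyadicSol lam θ ν μ 0 a b a' b') (hlam : 0 ≤ lam)
    (hν : 0 ≤ ν) (hμ : 0 ≤ μ) (hpos : PositiveSol a b) (k : ℕ) {t T : ℝ} (ht : t ∈ Icc 0 T) :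
    shellEnergy lam γ a b k t
      ≤ shellEnergy lam γ a b k 0 + ∫ τ in Icc 0 T, shellFlux lam θ γ a b k τ := by
  have hflux : IntegrableOn (shellFlux lam θ γ a b k) (Icc 0 T) :=
    ((hsol.continuousOn_shellFlux k).mono Icc_subset_Ici_self).integrableOn_Icc
  have hgrowth : shellEnergy lam γ a b k t - shellEnergy lam γ a b k 0
      ≤ ∫ τ in 0..t, shellFlux lam θ γ a b k τ :=
    intervalIntegral.sub_le_integral_of_hasDeriv_right_of_le ht.1
      (fun τ hτ => (hsol.hasDerivWithinAt_shellEnergy k hτ.1).continuousWithinAt.mono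
        Icc_subset_Ici_self)
      (fun τ hτ => (hsol.hasDerivWithinAt_shellEnergy k hτ.1.le).mono
        (Ioi_subset_Ici_self.trans (Ici_subset_Ici.2 hτ.1.le)))
      (hflux.mono_set (Icc_subset_Icc_right ht.2))
      (fun τ hτ => hsol.shellEnergy_deriv_le hlam hν hμ hpos k hτ.1.le)
  have hmono : ∫ τ in 0..t, shellFlux lam θ γ a b k τ
      ≤ ∫ τ in Icc 0 T, shellFlux lam θ γ a b k τ := by
    rw [intervalIntegral.integral_of_le ht.1]
    exact setIntegral_mono_set hflux
      ((ae_restrict_mem measurableSet_Icc).mono fun τ hτ => shellFlux_nonneg hlam hpos k hτ.1)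
      (Ioc_subset_Icc_self.trans (Icc_subset_Icc_right ht.2)).eventuallyLE
  linarith

lemma shellFlux_succ_le (hlam : 1 ≤ lam) (hθγ : 0 ≤ θ + 2 * γ) (hpos : PositiveSol a b)
    (i : ℕ) {t : ℝ} (ht : t ∈ Ici (0 : ℝ)) :
    ENNReal.ofReal (shellFlux lam θ γ a b (i + 1) t) ≤
      ENNReal.ofReal (2 * lam ^ (2 * γ)) *
        (ENNReal.ofReal (lam ^ (2 * (θ / 3 + 2 * γ / 3) * ((i : ℝ) + 1)) * a (i + 1) t ^ 2)
          + ENNReal.ofReal (lam ^ (2 * (θ / 3 + 2 * γ / 3) * ((i : ℝ) + 1)) * b (i + 1) t ^ 2))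
        * esum lam (θ / 3 + 2 * γ / 3) (fun j => a j t) ^ (1 / 2 : ℝ) := by
  set s := θ / 3 + 2 * γ / 3
  have hlam0 : 0 < lam := by linarith
  have ha2 : 0 ≤ a (i + 1 + 1) t := (hpos _ (Nat.le_add_left 1 _) t ht).1.le
  -- the two sides differ by `(θ + 2γ) / 3`
  have hexp : 2 * γ * ((i : ℝ) + 1 + 1) + θ * ((i : ℝ) + 1)
      ≤ 2 * γ + 2 * s * ((i : ℝ) + 1) + s * ((i : ℝ) + 1 + 1) := by
    simp only [s]
    linarith
  have hreal : shellFlux lam θ γ a b (i + 1) t ≤ 2 * lam ^ (2 * γ)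
      * (lam ^ (2 * s * ((i : ℝ) + 1)) * a (i + 1) t ^ 2
        + lam ^ (2 * s * ((i : ℝ) + 1)) * b (i + 1) t ^ 2)
      * (lam ^ (s * ((i : ℝ) + 1 + 1)) * a (i + 1 + 1) t) := by
    have hpow : shellWeight lam γ (i + 1) * lam ^ (θ * ((i + 1 : ℕ) : ℝ))
        ≤ lam ^ (2 * γ) * lam ^ (2 * s * ((i : ℝ) + 1)) * lam ^ (s * ((i : ℝ) + 1 + 1)) := by
      rw [shellWeight, ← rpow_add hlam0, ← rpow_add hlam0, ← rpow_add hlam0]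
      push_cast
      exact rpow_le_rpow_of_exponent_le hlam hexp
    have := mul_le_mul_of_nonneg_right hpow
      (mul_nonneg (by positivity : 0 ≤ a (i + 1) t ^ 2 + b (i + 1) t ^ 2) ha2)
    rw [shellFlux]
    linarith
  have hsqrt := ofReal_le_esum_rpow_half (s := s) (u := fun j => a j t) hlam0.le (i + 1) ha2
  push_cast at hsqrt
  refine (ENNReal.ofReal_le_ofReal hreal).trans ?_
  rw [ENNReal.ofReal_mul (by positivity), ENNReal.ofReal_mul (by positivity),
    ENNReal.ofReal_add (by positivity) (by positivity)]
  gcongr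

lemma tsum_shellFlux_le (hlam : 1 ≤ lam) (hθγ : 0 ≤ θ + 2 * γ) (hpos : PositiveSol a b)
    {t : ℝ} (ht : t ∈ Ici (0 : ℝ)) (ha0 : a 0 t = 0) (hb0 : b 0 t = 0) :
    ∑' k, ENNReal.ofReal (shellFlux lam θ γ a b k t) ≤
      2 * ENNReal.ofReal (2 * lam ^ (2 * γ)) *
        (esum lam (θ / 3 + 2 * γ / 3) (fun j => a j t) ^ (3 / 2 : ℝ)
          + esum lam (θ / 3 + 2 * γ / 3) (fun j => b j t) ^ (3 / 2 : ℝ)) := by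
  set s := θ / 3 + 2 * γ / 3
  set A := esum lam s (fun j => a j t)
  set B := esum lam s (fun j => b j t)
  have hflux0 : shellFlux lam θ γ a b 0 t = 0 := by simp [shellFlux, ha0, hb0]
  calc ∑' k, ENNReal.ofReal (shellFlux lam θ γ a b k t)
      = ∑' i, ENNReal.ofReal (shellFlux lam θ γ a b (i + 1) t) := by
        rw [tsum_eq_zero_add' ENNReal.summable, hflux0, ENNReal.ofReal_zero, zero_add]
    _ ≤ ∑' i : ℕ, ENNReal.ofReal (2 * lam ^ (2 * γ)) *
          (ENNReal.ofReal (lam ^ (2 * s * ((i : ℝ) + 1)) * a (i + 1) t ^ 2)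
            + ENNReal.ofReal (lam ^ (2 * s * ((i : ℝ) + 1)) * b (i + 1) t ^ 2)) * A ^ (1 / 2 : ℝ) :=
        ENNReal.tsum_le_tsum fun i => shellFlux_succ_le hlam hθγ hpos i ht
    _ = ENNReal.ofReal (2 * lam ^ (2 * γ)) * ((A + B) * A ^ (1 / 2 : ℝ)) := by
        rw [ENNReal.tsum_mul_right, ENNReal.tsum_mul_left, ENNReal.tsum_add, mul_assoc]
        rfl
    _ ≤ ENNReal.ofReal (2 * lam ^ (2 * γ)) * (2 * (A ^ (3 / 2 : ℝ) + B ^ (3 / 2 : ℝ))) :=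
        mul_le_mul_of_nonneg_left (ENNReal.add_mul_rpow_half_le A B) (by positivity)
    _ = _ := by ring

lemma IsDyadicSol.summable_integral_shellFlux (hsol : IsDyadicSol lam θ ν μ di a b a' b')
    (hlam : 1 ≤ lam) (hθγ : 0 ≤ θ + 2 * γ) (hpos : PositiveSol a b) {T : ℝ}
    (hloc : ∫⁻ t in Icc (0 : ℝ) T,
        (esum lam (θ / 3 + 2 * γ / 3) (fun j => a j t) ^ (3 / 2 : ℝ)
          + esum lam (θ / 3 + 2 * γ / 3) (fun j => b j t) ^ (3 / 2 : ℝ)) < ⊤) :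
    Summable fun k => ∫ τ in Icc 0 T, shellFlux lam θ γ a b k τ := by
  have hlam0 : 0 ≤ lam := zero_le_one.trans hlam
  have hcont k : ContinuousOn (shellFlux lam θ γ a b k) (Icc 0 T) :=
    (hsol.continuousOn_shellFlux k).mono Icc_subset_Ici_self
  have hint k : ∫ τ in Icc 0 T, shellFlux lam θ γ a b k τ
      = (∫⁻ τ in Icc 0 T, ENNReal.ofReal (shellFlux lam θ γ a b k τ)).toReal :=
    integral_eq_lintegral_of_nonneg_ae
      ((ae_restrict_mem measurableSet_Icc).mono fun τ hτ => shellFlux_nonneg hlam0 hpos k hτ.1)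
      ((hcont k).aestronglyMeasurable measurableSet_Icc)
  refine (ENNReal.summable_toReal ?_).congr fun k => (hint k).symm
  rw [← lintegral_tsum (f := fun k τ => ENNReal.ofReal (shellFlux lam θ γ a b k τ)) fun k =>
    ENNReal.measurable_ofReal.comp_aemeasurable ((hcont k).aemeasurable measurableSet_Icc)]
  refine ne_of_lt ?_
  calc ∫⁻ τ in Icc 0 T, ∑' k, ENNReal.ofReal (shellFlux lam θ γ a b k τ)
      ≤ ∫⁻ τ in Icc 0 T, 2 * ENNReal.ofReal (2 * lam ^ (2 * γ)) *
          (esum lam (θ / 3 + 2 * γ / 3) (fun j => a j τ) ^ (3 / 2 : ℝ)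
            + esum lam (θ / 3 + 2 * γ / 3) (fun j => b j τ) ^ (3 / 2 : ℝ)) :=
        setLIntegral_mono_ae' measurableSet_Icc (.of_forall fun τ hτ =>
          tsum_shellFlux_le hlam hθγ hpos hτ.1 (hsol.a_zero τ) (hsol.b_zero τ))
    _ = 2 * ENNReal.ofReal (2 * lam ^ (2 * γ)) * ∫⁻ τ in Icc 0 T,
          (esum lam (θ / 3 + 2 * γ / 3) (fun j => a j τ) ^ (3 / 2 : ℝ)
            + esum lam (θ / 3 + 2 * γ / 3) (fun j => b j τ) ^ (3 / 2 : ℝ)) :=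
        lintegral_const_mul' _ _ (by finiteness)
    _ < ⊤ := ENNReal.mul_lt_top (by finiteness) hloc

lemma IsDyadicSol.exists_summable_shellEnergy_bound (hsol : IsDyadicSol lam θ ν μ 0 a b a' b')
    (hlam : 1 ≤ lam) (hθγ : 0 ≤ θ + 2 * γ) (hν : 0 ≤ ν) (hμ : 0 ≤ μ) (hpos : PositiveSol a b)
    (hinit : esum lam γ (fun j => a j 0) + esum lam γ (fun j => b j 0) < ⊤) {T : ℝ}
    (hloc : ∫⁻ t in Icc (0 : ℝ) T,
        (esum lam (θ / 3 + 2 * γ / 3) (fun j => a j t) ^ (3 / 2 : ℝ)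
          + esum lam (θ / 3 + 2 * γ / 3) (fun j => b j t) ^ (3 / 2 : ℝ)) < ⊤) :
    ∃ u : ℕ → ℝ, Summable u ∧ ∀ t ∈ Icc 0 T, ∀ k, shellEnergy lam γ a b k t ≤ u k := by
  have hlam0 : 0 ≤ lam := zero_le_one.trans hlam
  have hinit0 : Summable fun k => shellEnergy lam γ a b k 0 := by
    refine ((summable_of_esum_ne_top hlam0 (ENNReal.add_lt_top.1 hinit).1.ne).add
      (summable_of_esum_ne_top hlam0 (ENNReal.add_lt_top.1 hinit).2.ne)).congr fun k => ?_
    rw [shellEnergy, shellWeight]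
    ring
  exact ⟨_, hinit0.add (hsol.summable_integral_shellFlux hlam hθγ hpos hloc),
    fun t ht k => hsol.shellEnergy_le hlam0 hν hμ hpos k ht⟩

end Solution

theorem lyapunov_continuous_MHD_general
    (lam θ γ ν μ c1 c2 c3 : ℝ) (hlam : 2 ≤ lam) (hγ : 0 < γ) (hθ : 3 + γ < θ)
    (hν : 0 ≤ ν) (hμ : 0 ≤ μ)
    (a b a' b' : ℕ → ℝ → ℝ)
    (hsol : IsDyadicSol lam θ ν μ 0 a b a' b')
    (hpos : PositiveSol a b)
    (hinit : esum lam γ (fun j => a j 0) + esum lam γ (fun j => b j 0) < ⊤)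
    (hloc : ∀ T : ℝ, 0 < T →
      (∫⁻ t in Icc (0:ℝ) T,
          ((esum lam (θ / 3 + 2 * γ / 3) (fun j => a j t)) ^ (3/2 : ℝ)
            + (esum lam (θ / 3 + 2 * γ / 3) (fun j => b j t)) ^ (3/2 : ℝ))) < ⊤) :
    (∀ t ∈ Ici (0:ℝ),
      Summable (fun j : ℕ => lam ^ (2 * γ * ((j : ℝ) + 1)) * (a (j + 1) t) ^ 2) ∧
      Summable (fun j : ℕ => lam ^ (2 * γ * ((j : ℝ) + 1)) * (b (j + 1) t) ^ 2) ∧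
      Summable (fun j : ℕ => lam ^ (2 * γ * ((j : ℝ) + 1)) * (a (j + 1) t * a (j + 2) t)) ∧
      Summable (fun j : ℕ => lam ^ (2 * γ * ((j : ℝ) + 1)) * (b (j + 1) t * a (j + 2) t)) ∧
      Summable (fun j : ℕ => lam ^ (2 * γ * ((j : ℝ) + 1)) * (a (j + 1) t * b (j + 1) t))) ∧
    ContinuousOn (fun t : ℝ =>
      dsum lam γ (fun j => a j t) + dsum lam γ (fun j => b j t)
        + c1 * ∑' j : ℕ, lam ^ (2 * γ * ((j : ℝ) + 1)) * (a (j + 1) t * a (j + 2) t)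
        + c2 * ∑' j : ℕ, lam ^ (2 * γ * ((j : ℝ) + 1)) * (b (j + 1) t * a (j + 2) t)
        + c3 * ∑' j : ℕ, lam ^ (2 * γ * ((j : ℝ) + 1)) * (a (j + 1) t * b (j + 1) t))
      (Ici 0) := by
  have hlam1 : 1 ≤ lam := by linarith
  have hθγ : 0 ≤ θ + 2 * γ := by linarith
  have hbound (t : ℝ) (ht : t ∈ Ici (0 : ℝ)) :
      ∃ u : ℕ → ℝ, Summable u ∧ ∀ τ ∈ Icc 0 (t + 1), ∀ k, shellEnergy lam γ a b k τ ≤ u k :=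
    hsol.exists_summable_shellEnergy_bound hlam1 hθγ hν hμ hpos hinit
      (hloc (t + 1) (by linarith [mem_Ici.1 ht]))
  refine ⟨fun t ht => ?_, continuousOn_of_locally_continuousOn fun t ht => ?_⟩
  · obtain ⟨u, hu, hE⟩ := hbound t ht
    exact summable_lyapunov_series_of_shellEnergy_le hlam1 hγ.le hu hE ⟨ht, by linarith⟩
  · obtain ⟨u, hu, hE⟩ := hbound t ht
    refine ⟨Iio (t + 1), isOpen_Iio, by simp, ?_⟩
    exact (continuousOn_lyapunov_of_shellEnergy_le hlam1 hγ.le hu hE c1 c2 c3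
      (fun j => (hsol.continuousOn_a j).mono Icc_subset_Ici_self)
      (fun j => (hsol.continuousOn_b j).mono Icc_subset_Ici_self)).mono
      fun τ hτ => ⟨hτ.1, hτ.2.le⟩

theorem lyapunov_continuous_MHD
    (lam θ γ ν μ c1 c2 c3 : ℝ) (hlam : 2 ≤ lam) (hγ : 0 < γ) (hθ : 3 + γ < θ)
    (hν : 0 ≤ ν) (hμ : 0 ≤ μ) (hc1 : 0 < c1) (hc2 : 0 < c2) (hc3 : 0 < c3)
    (a b a' b' : ℕ → ℝ → ℝ)
    (hsol : IsDyadicSol lam θ ν μ 0 a b a' b')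
    (hpos : PositiveSol a b)
    (hinit : esum lam γ (fun j => a j 0) + esum lam γ (fun j => b j 0) < ⊤)
    (hloc : ∀ T : ℝ, 0 < T →
      (∫⁻ t in Icc (0:ℝ) T,
          ((esum lam (θ / 3 + 2 * γ / 3) (fun j => a j t)) ^ (3/2 : ℝ)
            + (esum lam (θ / 3 + 2 * γ / 3) (fun j => b j t)) ^ (3/2 : ℝ))) < ⊤) :
    (∀ t ∈ Ici (0:ℝ),
      Summable (fun j : ℕ => lam ^ (2 * γ * ((j : ℝ) + 1)) * (a (j + 1) t) ^ 2) ∧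
      Summable (fun j : ℕ => lam ^ (2 * γ * ((j : ℝ) + 1)) * (b (j + 1) t) ^ 2) ∧
      Summable (fun j : ℕ => lam ^ (2 * γ * ((j : ℝ) + 1)) * (a (j + 1) t * a (j + 2) t)) ∧
      Summable (fun j : ℕ => lam ^ (2 * γ * ((j : ℝ) + 1)) * (b (j + 1) t * a (j + 2) t)) ∧
      Summable (fun j : ℕ => lam ^ (2 * γ * ((j : ℝ) + 1)) * (a (j + 1) t * b (j + 1) t))) ∧
    ContinuousOn (fun t : ℝ =>
      dsum lam γ (fun j => a j t) + dsum lam γ (fun j => b j t)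
        + c1 * ∑' j : ℕ, lam ^ (2 * γ * ((j : ℝ) + 1)) * (a (j + 1) t * a (j + 2) t)
        + c2 * ∑' j : ℕ, lam ^ (2 * γ * ((j : ℝ) + 1)) * (b (j + 1) t * a (j + 2) t)
        + c3 * ∑' j : ℕ, lam ^ (2 * γ * ((j : ℝ) + 1)) * (a (j + 1) t * b (j + 1) t))
      (Ici 0) :=
  lyapunov_continuous_MHD_general lam θ γ ν μ c1 c2 c3 hlam hγ hθ hν hμ a b a' b' hsol hpos hinit
    hloc
end
end

section
/- Let λ ≥ 2, θ > 3 and 0 < γ < θ − 3. Then there exist constants c1 > 0, c2 > 0 with c1 = c2, c3 > 0 and c4 > 0 satisfying the six inequalities: (1) c1(1 − (1/2)λ^{−(2γ+θ)/2} − (1/4)λ^{−4γ−θ} − (1/3)λ^{−2γ}) − c2((1/2)λ^{−(2γ+θ)/2} + (1/4)λ^{−4γ−θ}) ≥ c4; (2) c2(1 − (1/4)λ^{−4γ−θ}) − (2/3)c1 λ^{−2γ} ≥ c4; (3) c1(1 − (1/2)λ^{−(2γ+θ)/2}) ≥ 0; (4) 2(λ^{2γ} − 1) − c1((1/2)λ^{−(2γ+θ)/2}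 + (1/2)λ^θ + (1/4)λ^{−2γ}) − (1/4)c2 λ^{−2γ} − c3 ≥ 0; (5) 2(λ^{2γ} − 1) − (1/2)c1 λ^{−(2γ+θ)/2} − (1/2)c2(λ^{−(2γ+θ)/2} + λ^θ) − c3 ≥ 0; (6) c3(λ^{2γ} − 1) − c2((1/2)λ^θ + (1/4)λ^{−2γ}) ≥ 0. -/
open Real MeasureTheory Set
open scoped ENNReal

noncomputable section

lemma rpow_le_inv_two_pow {lam s : ℝ} (n : ℕ) (hlam : 2 ≤ lam) (hs : s ≤ -n) :
    lam ^ s ≤ (2 ^ n)⁻¹ :=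
  calc lam ^ s ≤ lam ^ (-(n : ℝ)) := Real.rpow_le_rpow_of_exponent_le (by linarith) hs
    _ = (lam ^ n)⁻¹ := by rw [Real.rpow_neg (by linarith), Real.rpow_natCast]
    _ ≤ (2 ^ n)⁻¹ := inv_anti₀ (by positivity) (pow_le_pow_left₀ zero_le_two hlam n)

/-- The substitution `x = λ^{-(2γ+θ)/2}`, `y = λ^{-(4γ+θ)}`, `z = λ^{-2γ}`, `T = λ^θ`,
`A = λ^{2γ} - 1` turns the six conditions into these. -/
lemma exists_coeffs_of_le {x y z T A : ℝ} (hx : x ≤ 1/2) (hy : y ≤ 1/8) (hz : z ≤ 1)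
    (hT : 0 ≤ T) (hA : 0 < A) :
    ∃ c c3 c4 : ℝ, 0 < c ∧ 0 < c3 ∧ 0 < c4 ∧
      c * (1 - 1/2 * x - 1/4 * y - 1/3 * z) - c * (1/2 * x + 1/4 * y) ≥ c4 ∧
      c * (1 - 1/4 * y) - 2/3 * c * z ≥ c4 ∧
      c * (1 - 1/2 * x) ≥ 0 ∧
      2 * A - c * (1/2 * x + 1/2 * T + 1/4 * z) - 1/4 * c * z - c3 ≥ 0 ∧
      2 * A - 1/2 * c * x - 1/2 * c * (x + T) - c3 ≥ 0 ∧
      c3 * A - c * (1/2 * T + 1/4 * z) ≥ 0 := by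
  -- With `c3 = A`, the last three conditions hold as soon as `c (1 + T) ≤ min A A²`;
  -- `5/48 = 1 - 1/2 - 1/16 - 1/3` is the first condition at the extreme bounds.
  set c := min A (A ^ 2) / (1 + T)
  have hc : 0 < c := by positivity
  have hcT : c * (1 + T) = min A (A ^ 2) := div_mul_cancel₀ _ (by positivity)
  have hcA : c * (1 + T) ≤ A := hcT ▸ min_le_left _ _
  have hcA2 : c * (1 + T) ≤ A * A := hcT ▸ (sq A).symm ▸ min_le_right _ _
  have hcx := mul_le_mul_of_nonneg_left hx hc.le
  have hcy := mul_le_mul_of_nonneg_left hy hc.le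
  have hcz := mul_le_mul_of_nonneg_left hz hc.le
  refine ⟨c, A, 5/48 * c, hc, hA, by positivity, ?_, ?_, ?_, ?_, ?_, ?_⟩ <;>
    nlinarith

theorem exists_parameters_MHD_general
    (lam θ γ : ℝ) (hlam : 2 ≤ lam) (hθ : 3 < θ) (hγ0 : 0 < γ) :
    ∃ c1 c2 c3 c4 : ℝ, 0 < c1 ∧ 0 < c2 ∧ c1 = c2 ∧ 0 < c3 ∧ 0 < c4 ∧
      c1 * (1 - 1/2 * lam ^ (-(2 * γ + θ) / 2) - 1/4 * lam ^ (-(4 * γ + θ))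
            - 1/3 * lam ^ (-(2 * γ)))
          - c2 * (1/2 * lam ^ (-(2 * γ + θ) / 2) + 1/4 * lam ^ (-(4 * γ + θ))) ≥ c4 ∧
      c2 * (1 - 1/4 * lam ^ (-(4 * γ + θ))) - 2/3 * c1 * lam ^ (-(2 * γ)) ≥ c4 ∧
      c1 * (1 - 1/2 * lam ^ (-(2 * γ + θ) / 2)) ≥ 0 ∧
      2 * (lam ^ (2 * γ) - 1)
          - c1 * (1/2 * lam ^ (-(2 * γ + θ) / 2) + 1/2 * lam ^ θ + 1/4 * lam ^ (-(2 * γ)))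
          - 1/4 * c2 * lam ^ (-(2 * γ)) - c3 ≥ 0 ∧
      2 * (lam ^ (2 * γ) - 1) - 1/2 * c1 * lam ^ (-(2 * γ + θ) / 2)
          - 1/2 * c2 * (lam ^ (-(2 * γ + θ) / 2) + lam ^ θ) - c3 ≥ 0 ∧
      c3 * (lam ^ (2 * γ) - 1) - c2 * (1/2 * lam ^ θ + 1/4 * lam ^ (-(2 * γ))) ≥ 0 := by
  have hlam1 : 1 ≤ lam := by linarith
  have hx : lam ^ (-(2 * γ + θ) / 2) ≤ 1/2 := by
    simpa using rpow_le_inv_two_pow 1 hlam (by push_cast; linarith)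
  have hy : lam ^ (-(4 * γ + θ)) ≤ 1/8 := by
    simpa [show (2:ℝ) ^ 3 = 8 by norm_num] using
      rpow_le_inv_two_pow 3 hlam (by push_cast; linarith)
  have hz : lam ^ (-(2 * γ)) ≤ 1 := Real.rpow_le_one_of_one_le_of_nonpos hlam1 (by linarith)
  have hA : 0 < lam ^ (2 * γ) - 1 :=
    sub_pos.2 (Real.one_lt_rpow (by linarith) (by linarith))
  obtain ⟨c, c3, c4, hc, hc3, hc4, h1, h2, h3, h4, h5, h6⟩ :=
    exists_coeffs_of_le hx hy hz (Real.rpow_nonneg (by linarith : 0 ≤ lam) θ) hA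
  exact ⟨c, c, c3, c4, hc, hc, rfl, hc3, hc4, h1, h2, h3, h4, h5, h6⟩

theorem exists_parameters_MHD
    (lam θ γ : ℝ) (hlam : 2 ≤ lam) (hθ : 3 < θ) (hγ0 : 0 < γ) (hγ : γ < θ - 3) :
    ∃ c1 c2 c3 c4 : ℝ, 0 < c1 ∧ 0 < c2 ∧ c1 = c2 ∧ 0 < c3 ∧ 0 < c4 ∧
      c1 * (1 - 1/2 * lam ^ (-(2 * γ + θ) / 2) - 1/4 * lam ^ (-(4 * γ + θ))
            - 1/3 * lam ^ (-(2 * γ)))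
          - c2 * (1/2 * lam ^ (-(2 * γ + θ) / 2) + 1/4 * lam ^ (-(4 * γ + θ))) ≥ c4 ∧
      c2 * (1 - 1/4 * lam ^ (-(4 * γ + θ))) - 2/3 * c1 * lam ^ (-(2 * γ)) ≥ c4 ∧
      c1 * (1 - 1/2 * lam ^ (-(2 * γ + θ) / 2)) ≥ 0 ∧
      2 * (lam ^ (2 * γ) - 1)
          - c1 * (1/2 * lam ^ (-(2 * γ + θ) / 2) + 1/2 * lam ^ θ + 1/4 * lam ^ (-(2 * γ)))
          - 1/4 * c2 * lam ^ (-(2 * γ)) - c3 ≥ 0 ∧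
      2 * (lam ^ (2 * γ) - 1) - 1/2 * c1 * lam ^ (-(2 * γ + θ) / 2)
          - 1/2 * c2 * (lam ^ (-(2 * γ + θ) / 2) + lam ^ θ) - c3 ≥ 0 ∧
      c3 * (lam ^ (2 * γ) - 1) - c2 * (1/2 * lam ^ θ + 1/4 * lam ^ (-(2 * γ))) ≥ 0 :=
  exists_parameters_MHD_general lam θ γ hlam hθ hγ0
end
end
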